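/- arXiv:0803.1933 — 4 statements merged into one kernel-verified Lean document; each statement's English description precedes it below -/
import Mathlib

section
/- Let φ: ℝ → [0,∞) be C¹ with φ(E) = 0 for E ≥ E₀ and φ(E) > 0 for E < E₀, and define h(s) = 4π√2 ∫_s^{E₀} √(E-s) φ(E) dE for s ≤ E₀, extended by 0 for s > E₀. Then h is continuously differentiable on ℝ with h'(s) = -4π√2 ∫_s^{E₀} φ(E)/(2√(E-s)) dE for s < E₀ and h'(s) = 0 for s ≥ E₀. -/
open MeasureTheory Real intervalIntegral Set

lemma trunc_integrableOn {f : ℝ → ℝ} (hf : Continuous f) {K : ℝ} (hK : 0 ≤ K)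
    (h0 : ∀ u, K ≤ u → f u = 0) : IntegrableOn f (Set.Ioi (0:ℝ)) := by
  rw [← Set.Ioc_union_Ioi_eq_Ioi hK]
  refine MeasureTheory.IntegrableOn.union ?_ ?_
  · exact (hf.continuousOn.integrableOn_Icc).mono_set Set.Ioc_subset_Icc_self
  · exact (integrableOn_congr_fun (fun u hu => h0 u (le_of_lt hu)) measurableSet_Ioi).mpr
      (integrableOn_zero)

lemma trunc_integral {f : ℝ → ℝ} {K : ℝ} (hK : 0 ≤ K) (h0 : ∀ u, K ≤ u → f u = 0) :
    ∫ u in Set.Ioi (0:ℝ), f u = ∫ u in Set.Ioc 0 K, f u := by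
  refine setIntegral_eq_of_subset_of_forall_diff_eq_zero measurableSet_Ioi
    Set.Ioc_subset_Ioi_self (fun x hx => ?_)
  obtain ⟨hx1, hx2⟩ := hx
  refine h0 x ?_
  by_contra hc
  exact hx2 ⟨hx1, le_of_not_ge hc⟩

lemma subst_sq (g : ℝ → ℝ) :
    ∫ u in Set.Ioi (0:ℝ), g u = ∫ t in Set.Ioi (0:ℝ), (2*t) * g (t^2) := by
  have himg : (fun t : ℝ => t^2) '' Set.Ioi 0 = Set.Ioi 0 := by
    ext x
    constructor
    · rintro ⟨t, ht, rfl⟩; exact pow_pos (Set.mem_Ioi.mp ht) 2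
    · intro hx; exact ⟨Real.sqrt x, Real.sqrt_pos.mpr hx, Real.sq_sqrt (le_of_lt hx)⟩
  have hf' : ∀ x ∈ Set.Ioi (0:ℝ),
      HasDerivWithinAt (fun t : ℝ => t^2) (2*x) (Set.Ioi 0) x := by
    intro x _
    simpa using (hasDerivAt_pow 2 x).hasDerivWithinAt
  have hinj : Set.InjOn (fun t : ℝ => t^2) (Set.Ioi 0) := by
    intro a ha b hb hab
    simp only [Set.mem_Ioi] at ha hb
    have hab' : a^2 = b^2 := hab
    nlinarith [sq_nonneg (a - b), sq_nonneg (a + b)]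
  have := MeasureTheory.integral_image_eq_integral_abs_deriv_smul measurableSet_Ioi
    (fun x hx => hf' x hx) hinj g
  rw [himg] at this
  rw [this]
  refine setIntegral_congr_fun measurableSet_Ioi (fun t ht => ?_)
  rw [abs_of_pos (mul_pos two_pos (Set.mem_Ioi.mp ht)), smul_eq_mul]

lemma deriv_van {φ : ℝ → ℝ} {E₀ : ℝ} (hφC1 : ContDiff ℝ 1 φ)
    (hφvan : ∀ E, E₀ ≤ E → φ E = 0) : ∀ E, E₀ ≤ E → deriv φ E = 0 := by
  have hcont : Continuous (deriv φ) := (contDiff_one_iff_deriv.mp hφC1).2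
  have hgt : ∀ E, E₀ < E → deriv φ E = 0 := by
    intro E hE
    have hev : φ =ᶠ[nhds E] fun _ => (0:ℝ) := by
      filter_upwards [Ioi_mem_nhds hE] with x hx
      exact hφvan x (le_of_lt (Set.mem_Ioi.mp hx))
    rw [hev.deriv_eq, deriv_const]
  have hE0 : deriv φ E₀ = 0 := by
    have h1 : Filter.Tendsto (deriv φ) (nhdsWithin E₀ (Set.Ioi E₀)) (nhds (deriv φ E₀)) :=
      (hcont.continuousAt).continuousWithinAt
    have h2 : Filter.Tendsto (deriv φ) (nhdsWithin E₀ (Set.Ioi E₀)) (nhds 0) := by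
      refine Filter.Tendsto.congr' ?_ tendsto_const_nhds
      filter_upwards [self_mem_nhdsWithin] with x hx
      exact (hgt x hx).symm
    exact tendsto_nhds_unique h1 h2
  intro E hE
  rcases eq_or_lt_of_le hE with heq | hlt
  · rw [← heq]; exact hE0
  · exact hgt E hlt

lemma ibp_sq {φ : ℝ → ℝ} {E₀ : ℝ} (hφC1 : ContDiff ℝ 1 φ)
    (hφvan : ∀ E, E₀ ≤ E → φ E = 0) (s : ℝ) :
    (∫ t in Set.Ioi (0:ℝ), 2*t^2 * deriv φ (s + t^2)) =
      -∫ t in Set.Ioi (0:ℝ), φ (s + t^2) := by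
  have hdvan := deriv_van hφC1 hφvan
  have hcφ : Continuous φ := hφC1.continuous
  have hcd : Continuous (deriv φ) := (contDiff_one_iff_deriv.mp hφC1).2
  have hφdiff : Differentiable ℝ φ := hφC1.differentiable one_ne_zero
  set R : ℝ := Real.sqrt (max (E₀ - s) 0) with hR
  have hR0 : 0 ≤ R := Real.sqrt_nonneg _
  have hR2 : R^2 = max (E₀ - s) 0 := Real.sq_sqrt (le_max_right _ _)
  have hbig : ∀ t, R ≤ t → E₀ ≤ s + t^2 := by
    intro t ht
    have h1 : R^2 ≤ t^2 := pow_le_pow_left₀ hR0 ht 2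
    rw [hR2] at h1
    have h2 : E₀ - s ≤ max (E₀ - s) 0 := le_max_left _ _
    linarith
  have hcont1 : Continuous fun t : ℝ => φ (s + t^2) :=
    hcφ.comp (continuous_const.add (continuous_pow 2))
  have hcont2 : Continuous fun t : ℝ => 2*t^2 * deriv φ (s + t^2) :=
    (continuous_const.mul (continuous_pow 2)).mul
      (hcd.comp (continuous_const.add (continuous_pow 2)))
  have hA : (∫ t in Set.Ioi (0:ℝ), φ (s + t^2)) = ∫ t in Set.Ioc (0:ℝ) R, φ (s + t^2) :=
    trunc_integral hR0 (fun t ht => hφvan _ (hbig t ht))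
  have hB : (∫ t in Set.Ioi (0:ℝ), 2*t^2 * deriv φ (s + t^2)) =
      ∫ t in Set.Ioc (0:ℝ) R, 2*t^2 * deriv φ (s + t^2) :=
    trunc_integral hR0 (fun t ht => by rw [hdvan _ (hbig t ht), mul_zero])
  have hsum : (∫ t in (0:ℝ)..R, (φ (s + t^2) + 2*t^2 * deriv φ (s + t^2))) = 0 := by
    have hF : ∀ t ∈ Set.uIcc (0:ℝ) R, HasDerivAt (fun t : ℝ => t * φ (s + t^2))
        (φ (s + t^2) + 2*t^2 * deriv φ (s + t^2)) t := by
      intro t _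
      have hinner : HasDerivAt (fun t : ℝ => s + t^2) (2*t) t := by
        simpa using ((hasDerivAt_pow 2 t).const_add s)
      have hφd : HasDerivAt φ (deriv φ (s + t^2)) (s + t^2) := (hφdiff _).hasDerivAt
      have hcomp := hφd.comp t hinner
      have hmul := (hasDerivAt_id t).mul hcomp
      simp only [Function.comp_def, id_eq, one_mul] at hmul
      exact hmul.congr_deriv (by ring)
    have hint : IntervalIntegrable (fun t : ℝ => φ (s + t^2) + 2*t^2 * deriv φ (s + t^2))
        MeasureTheory.volume 0 R := (hcont1.add hcont2).intervalIntegrable _ _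
    rw [intervalIntegral.integral_eq_sub_of_hasDerivAt hF hint]
    have h0 : φ (s + R^2) = 0 := hφvan _ (hbig R le_rfl)
    simp [h0]
  have e1 : (∫ t in (0:ℝ)..R, (φ (s + t^2) + 2*t^2 * deriv φ (s + t^2))) =
      (∫ t in (0:ℝ)..R, φ (s + t^2)) + ∫ t in (0:ℝ)..R, 2*t^2 * deriv φ (s + t^2) :=
    intervalIntegral.integral_add (hcont1.intervalIntegrable _ _)
      (hcont2.intervalIntegrable _ _)
  rw [hA, hB, ← intervalIntegral.integral_of_le hR0, ← intervalIntegral.integral_of_le hR0]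
  rw [e1] at hsum
  linarith

/-- `h(s) = 4π√2 ∫_s^{E₀} √(E-s) φ(E) dE` (for `s ≤ E₀`, extended by `0`)
is continuously differentiable with `h'(s) = -4π√2 ∫_s^{E₀} φ(E)/(2√(E-s)) dE` for
`s < E₀` and `h'(s) = 0` for `s ≥ E₀`. -/
theorem stmt1 (φ : ℝ → ℝ) (E₀ : ℝ)
    (hφC1 : ContDiff ℝ 1 φ) (hφnn : ∀ E, 0 ≤ φ E)
    (hφvan : ∀ E, E₀ ≤ E → φ E = 0) (hφpos : ∀ E, E < E₀ → 0 < φ E)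
    (h : ℝ → ℝ)
    (hh : ∀ s : ℝ, h s =
      if s ≤ E₀ then 4 * π * Real.sqrt 2 * ∫ E in s..E₀, Real.sqrt (E - s) * φ E else 0) :
    ContDiff ℝ 1 h ∧
    (∀ s : ℝ, s < E₀ →
      deriv h s = -(4 * π * Real.sqrt 2) * ∫ E in s..E₀, φ E / (2 * Real.sqrt (E - s))) ∧
    (∀ s : ℝ, E₀ ≤ s → deriv h s = 0) := by
  have hdvan := deriv_van hφC1 hφvan
  have hcφ : Continuous φ := hφC1.continuous
  have hcd : Continuous (deriv φ) := (contDiff_one_iff_deriv.mp hφC1).2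
  have hφdiff : Differentiable ℝ φ := hφC1.differentiable one_ne_zero
  set c : ℝ := 4 * π * Real.sqrt 2 with hc
  set d : ℝ → ℝ := fun s => ∫ t in Set.Ioi (0:ℝ), φ (s + t^2) with hd
  set g : ℝ → ℝ := fun s => ∫ t in Set.Ioi (0:ℝ), 2*t^2 * φ (s + t^2) with hg
  -- setup for the uniform truncation constants
  have hKfacts : ∀ s₀ : ℝ, ∃ K : ℝ, 0 ≤ K ∧ K^2 = max (E₀ - s₀ + 1) 1 ∧
      (∀ x t : ℝ, x ∈ Metric.ball s₀ 1 → K ≤ t → E₀ ≤ x + t^2) := by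
    intro s₀
    refine ⟨Real.sqrt (max (E₀ - s₀ + 1) 1), Real.sqrt_nonneg _,
      Real.sq_sqrt (le_trans zero_le_one (le_max_right _ _)), ?_⟩
    intro x t hx ht
    have h1 : (Real.sqrt (max (E₀ - s₀ + 1) 1))^2 ≤ t^2 :=
      pow_le_pow_left₀ (Real.sqrt_nonneg _) ht 2
    rw [Real.sq_sqrt (le_trans zero_le_one (le_max_right _ _))] at h1
    have h2 : E₀ - s₀ + 1 ≤ max (E₀ - s₀ + 1) 1 := le_max_left _ _
    have h3 : |x - s₀| < 1 := by simpa [Real.dist_eq] using hx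
    obtain ⟨h4, h5⟩ := abs_lt.mp h3
    linarith
  -- h equals c * g
  have hhg : ∀ s, h s = c * g s := by
    intro s
    rw [hh s]
    by_cases hs : s ≤ E₀
    · rw [if_pos hs]
      congr 1
      have h0s : (0:ℝ) ≤ E₀ - s := by linarith
      have e1 : (∫ x in (0:ℝ)..(E₀ - s), Real.sqrt x * φ (x + s))
          = ∫ E in s..E₀, Real.sqrt (E - s) * φ E := by
        have := intervalIntegral.integral_comp_add_right (a := (0:ℝ)) (b := E₀ - s)
          (fun E => Real.sqrt (E - s) * φ E) s
        simpa using this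
      have e2 : (∫ x in (0:ℝ)..(E₀ - s), Real.sqrt x * φ (x + s))
          = ∫ x in Set.Ioc (0:ℝ) (E₀ - s), Real.sqrt x * φ (x + s) :=
        intervalIntegral.integral_of_le h0s
      have e3 : (∫ x in Set.Ioi (0:ℝ), Real.sqrt x * φ (x + s))
          = ∫ x in Set.Ioc (0:ℝ) (E₀ - s), Real.sqrt x * φ (x + s) :=
        trunc_integral h0s (fun u hu => by rw [hφvan (u + s) (by linarith), mul_zero])
      have e4 := subst_sq (fun x => Real.sqrt x * φ (x + s))
      have e5 : (∫ t in Set.Ioi (0:ℝ), (2*t) * (Real.sqrt (t^2) * φ (t^2 + s)))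
          = g s := by
        rw [hg]
        refine setIntegral_congr_fun measurableSet_Ioi (fun t ht => ?_)
        show (2*t) * (Real.sqrt (t^2) * φ (t^2 + s)) = 2*t^2 * φ (s + t^2)
        rw [Real.sqrt_sq (le_of_lt (Set.mem_Ioi.mp ht)), add_comm (t^2) s]
        ring
      rw [← e1, e2, ← e3, e4]
      exact e5
    · rw [if_neg hs]
      have hg0 : g s = 0 := by
        have hz : ∀ t ∈ Set.Ioi (0:ℝ), 2*t^2 * φ (s + t^2) = (fun _ => (0:ℝ)) t := by
          intro t ht
          have ht' : (0:ℝ) < t := ht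
          have hE : E₀ ≤ s + t^2 := by nlinarith [lt_of_not_ge hs]
          show 2*t^2 * φ (s + t^2) = 0
          rw [hφvan _ hE, mul_zero]
        show (∫ t in Set.Ioi (0:ℝ), 2*t^2 * φ (s + t^2)) = 0
        rw [setIntegral_congr_fun measurableSet_Ioi hz]; simp
      rw [hg0, mul_zero]
  -- derivative of g
  have hgd : ∀ s₀ : ℝ, HasDerivAt g (-(d s₀)) s₀ := by
    intro s₀
    obtain ⟨K, hK0, hK2, hKbig⟩ := hKfacts s₀
    obtain ⟨M0, hM0⟩ := (isCompact_Icc (a := s₀ - 1)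
      (b := s₀ + 1 + K^2)).exists_bound_of_continuousOn hcd.continuousOn
    set M : ℝ := max M0 0 with hM
    have hMnn : (0:ℝ) ≤ M := le_max_right _ _
    have hcont1 : ∀ x : ℝ, Continuous fun t : ℝ => 2*t^2 * φ (x + t^2) := fun x =>
      (continuous_const.mul (continuous_pow 2)).mul
        (hcφ.comp (continuous_const.add (continuous_pow 2)))
    have hcont2 : ∀ x : ℝ, Continuous fun t : ℝ => 2*t^2 * deriv φ (x + t^2) := fun x =>
      (continuous_const.mul (continuous_pow 2)).mul
        (hcd.comp (continuous_const.add (continuous_pow 2)))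
    have key := hasDerivAt_integral_of_dominated_loc_of_deriv_le
      (F := fun x t => 2*t^2 * φ (x + t^2)) (F' := fun x t => 2*t^2 * deriv φ (x + t^2))
      (x₀ := s₀) (s := Metric.ball s₀ 1) (μ := MeasureTheory.volume.restrict (Set.Ioi (0:ℝ)))
      (bound := (Set.Ioc (0:ℝ) K).indicator (fun _ => 2*K^2*M))
      (Metric.ball_mem_nhds s₀ one_pos)
      (Filter.Eventually.of_forall (fun x => (hcont1 x).aestronglyMeasurable))
      (trunc_integrableOn (hcont1 s₀) hK0 (fun t ht => by
        show 2*t^2 * φ (s₀ + t^2) = 0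
        rw [hφvan _ (hKbig s₀ t (Metric.mem_ball_self one_pos) ht), mul_zero]))
      ((hcont2 s₀).aestronglyMeasurable)
      ?_ ?_ ?_
    · have heq : (∫ t in Set.Ioi (0:ℝ), 2*t^2 * deriv φ (s₀ + t^2)) = -(d s₀) := by
        rw [hd]
        exact ibp_sq hφC1 hφvan s₀
      have hmain := key.2
      rw [heq] at hmain
      exact hmain
    · rw [MeasureTheory.ae_restrict_iff' measurableSet_Ioi]
      refine Filter.Eventually.of_forall (fun t ht x hx => ?_)
      have ht' : (0:ℝ) < t := ht
      show ‖2*t^2 * deriv φ (x + t^2)‖ ≤ (Set.Ioc (0:ℝ) K).indicator (fun _ => 2*K^2*M) t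
      rcases le_or_gt t K with hle | hgt
      · rw [Set.indicator_of_mem (Set.mem_Ioc.mpr ⟨ht', hle⟩)]
        have h6 : t^2 ≤ K^2 := pow_le_pow_left₀ ht'.le hle 2
        have h3 : |x - s₀| < 1 := by simpa [Real.dist_eq] using hx
        obtain ⟨h4, h5⟩ := abs_lt.mp h3
        have h7 : x + t^2 ∈ Set.Icc (s₀ - 1) (s₀ + 1 + K^2) :=
          ⟨by nlinarith [sq_nonneg t], by linarith⟩
        have h8 : ‖deriv φ (x + t^2)‖ ≤ M := le_trans (hM0 _ h7) (le_max_left _ _)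
        rw [Real.norm_eq_abs, abs_mul, abs_of_nonneg (by positivity : (0:ℝ) ≤ 2*t^2)]
        rw [Real.norm_eq_abs] at h8
        nlinarith [abs_nonneg (deriv φ (x + t^2)), sq_nonneg t]
      · rw [Set.indicator_of_notMem (fun hcmem => absurd hcmem.2 (not_le.mpr hgt))]
        rw [hdvan _ (hKbig x t hx hgt.le), mul_zero, norm_zero]
    · refine MeasureTheory.Integrable.restrict ?_
      rw [MeasureTheory.integrable_indicator_iff measurableSet_Ioc]
      exact integrableOn_const measure_Ioc_lt_top.ne
    · refine Filter.Eventually.of_forall (fun t x hx => ?_)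
      have hinner : HasDerivAt (fun x : ℝ => x + t^2) 1 x := (hasDerivAt_id x).add_const _
      have hφd : HasDerivAt φ (deriv φ (x + t^2)) (x + t^2) := (hφdiff _).hasDerivAt
      have hcomp := hφd.comp x hinner
      have hfin := hcomp.const_mul (2*t^2)
      simpa using hfin
  -- continuity of d
  have hdc : Continuous d := by
    rw [continuous_iff_continuousAt]
    intro s₀
    obtain ⟨K, hK0, hK2, hKbig⟩ := hKfacts s₀
    obtain ⟨M0, hM0⟩ := (isCompact_Icc (a := s₀ - 1)
      (b := s₀ + 1 + K^2)).exists_bound_of_continuousOn hcφ.continuousOn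
    set M : ℝ := max M0 0 with hM
    refine MeasureTheory.continuousAt_of_dominated (F := fun x t => φ (x + t^2))
      (bound := (Set.Ioc (0:ℝ) K).indicator (fun _ => M))
      (Filter.Eventually.of_forall (fun x =>
        (hcφ.comp (continuous_const.add (continuous_pow 2))).aestronglyMeasurable))
      ?_ ?_ ?_
    · filter_upwards [Metric.ball_mem_nhds s₀ one_pos] with x hx
      rw [MeasureTheory.ae_restrict_iff' measurableSet_Ioi]
      refine Filter.Eventually.of_forall (fun t ht => ?_)
      have ht' : (0:ℝ) < t := ht
      show ‖φ (x + t^2)‖ ≤ (Set.Ioc (0:ℝ) K).indicator (fun _ => M) t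
      rcases le_or_gt t K with hle | hgt
      · rw [Set.indicator_of_mem (Set.mem_Ioc.mpr ⟨ht', hle⟩)]
        have h6 : t^2 ≤ K^2 := pow_le_pow_left₀ ht'.le hle 2
        have h3 : |x - s₀| < 1 := by simpa [Real.dist_eq] using hx
        obtain ⟨h4, h5⟩ := abs_lt.mp h3
        have h7 : x + t^2 ∈ Set.Icc (s₀ - 1) (s₀ + 1 + K^2) :=
          ⟨by nlinarith [sq_nonneg t], by linarith⟩
        exact le_trans (hM0 _ h7) (le_max_left _ _)
      · rw [Set.indicator_of_notMem (fun hcmem => absurd hcmem.2 (not_le.mpr hgt))]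
        rw [hφvan _ (hKbig x t hx hgt.le), norm_zero]
    · refine MeasureTheory.Integrable.restrict ?_
      rw [MeasureTheory.integrable_indicator_iff measurableSet_Ioc]
      exact integrableOn_const measure_Ioc_lt_top.ne
    · refine Filter.Eventually.of_forall (fun t => ?_)
      exact (hcφ.comp (continuous_id.add continuous_const)).continuousAt
  -- derivative of h
  have hhd : ∀ s, HasDerivAt h (-(c * d s)) s := by
    intro s
    have h1 := (hgd s).const_mul c
    have h2 : h = fun s => c * g s := funext hhg
    rw [h2]
    exact h1.congr_deriv (by ring)
  have hderiv : deriv h = fun s => -(c * d s) := funext fun s => (hhd s).deriv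
  refine ⟨?_, ?_, ?_⟩
  · rw [contDiff_one_iff_deriv]
    refine ⟨fun s => (hhd s).differentiableAt, ?_⟩
    rw [hderiv]
    exact (continuous_const.mul hdc).neg
  · intro s hs
    have hds : d s = ∫ E in s..E₀, φ E / (2 * Real.sqrt (E - s)) := by
      have h0s : (0:ℝ) ≤ E₀ - s := by linarith
      have e1 : (∫ x in (0:ℝ)..(E₀ - s), φ (x + s) / (2 * Real.sqrt x))
          = ∫ E in s..E₀, φ E / (2 * Real.sqrt (E - s)) := by
        have := intervalIntegral.integral_comp_add_right (a := (0:ℝ)) (b := E₀ - s)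
          (fun E => φ E / (2 * Real.sqrt (E - s))) s
        simpa using this
      have e2 : (∫ x in (0:ℝ)..(E₀ - s), φ (x + s) / (2 * Real.sqrt x))
          = ∫ x in Set.Ioc (0:ℝ) (E₀ - s), φ (x + s) / (2 * Real.sqrt x) :=
        intervalIntegral.integral_of_le h0s
      have e3 : (∫ x in Set.Ioi (0:ℝ), φ (x + s) / (2 * Real.sqrt x))
          = ∫ x in Set.Ioc (0:ℝ) (E₀ - s), φ (x + s) / (2 * Real.sqrt x) :=
        trunc_integral h0s (fun u hu => by rw [hφvan (u + s) (by linarith), zero_div])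
      have e4 := subst_sq (fun x => φ (x + s) / (2 * Real.sqrt x))
      have e5 : (∫ t in Set.Ioi (0:ℝ), (2*t) * (φ (t^2 + s) / (2 * Real.sqrt (t^2))))
          = d s := by
        rw [hd]
        refine setIntegral_congr_fun measurableSet_Ioi (fun t ht => ?_)
        have ht' : (0:ℝ) < t := ht
        show (2*t) * (φ (t^2 + s) / (2 * Real.sqrt (t^2))) = φ (s + t^2)
        rw [Real.sqrt_sq ht'.le, add_comm (t^2) s]
        have h2t : (2:ℝ) * t ≠ 0 := ne_of_gt (mul_pos two_pos ht')
        field_simp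
      rw [← e5, ← e4, e3, ← e2, e1]
    rw [hderiv]
    show -(c * d s) = -c * ∫ E in s..E₀, φ E / (2 * Real.sqrt (E - s))
    rw [hds]
    ring
  · intro s hs
    have hd0 : d s = 0 := by
      have hz : ∀ t ∈ Set.Ioi (0:ℝ), φ (s + t^2) = (fun _ => (0:ℝ)) t := by
        intro t ht
        have ht' : (0:ℝ) < t := ht
        show φ (s + t^2) = 0
        refine hφvan _ ?_
        nlinarith
      show (∫ t in Set.Ioi (0:ℝ), φ (s + t^2)) = 0
      rw [setIntegral_congr_fun measurableSet_Ioi hz]; simp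
    rw [hderiv]
    show -(c * d s) = 0
    rw [hd0, mul_zero, neg_zero]
end

section
/- Let ρ₀ ∈ C¹ be radial with support B₁, ρ₀' Hölder continuous, U₀ the associated Newtonian potential with U₀'(r) ≥ Cr on [0,4] for some C > 0. For Λ ∈ C(B₄) define (KΛ)(x) = -(1/U₀'(|x|)) ∫_{B₃} (1/|x-y| - 1/|y|) ρ₀'(|y|) Λ(y) dy for x ≠ 0. Then there is a constant C' > 0 (depending only on ρ₀, U₀) with |(KΛ)(x)| ≤ C' ‖Λ‖_∞ for all x ∈ B₄\{0} and all Λ. -/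
open Metric Real MeasureTheory Set

lemma aux_integrableOn (R : ℝ) :
    IntegrableOn (fun y : EuclideanSpace ℝ (Fin 3) => (‖y‖ ^ 2)⁻¹)
      (closedBall (0 : EuclideanSpace ℝ (Fin 3)) R) := by
  have hnn : ∀ y : EuclideanSpace ℝ (Fin 3), 0 ≤ (‖y‖ ^ 2)⁻¹ := fun y => by positivity
  constructor
  · exact Measurable.aestronglyMeasurable (by fun_prop)
  · rw [hasFiniteIntegral_iff_ofReal (ae_of_all _ hnn)]
    rw [lintegral_eq_lintegral_meas_le _ (ae_of_all _ hnn) (by fun_prop)]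
    set mB := volume (ball (0 : EuclideanSpace ℝ (Fin 3)) 1) with hmB
    set ν := volume.restrict (closedBall (0 : EuclideanSpace ℝ (Fin 3)) R) with hν
    have hbound : ∀ t : ℝ, 0 < t →
        ν {a : EuclideanSpace ℝ (Fin 3) | t ≤ (‖a‖ ^ 2)⁻¹}
        ≤ ENNReal.ofReal (t ^ (-(3:ℝ)/2)) * mB := by
      intro t ht
      have hsub : {a : EuclideanSpace ℝ (Fin 3) | t ≤ (‖a‖ ^ 2)⁻¹} ⊆
          closedBall (0 : EuclideanSpace ℝ (Fin 3)) (t ^ (-(1:ℝ)/2)) := by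
        intro a ha
        simp only [mem_setOf_eq] at ha
        rw [mem_closedBall_zero_iff]
        have h2 : ‖a‖ ^ 2 ≤ t⁻¹ := by
          rcases eq_or_ne (‖a‖) 0 with h | h
          · simp [h]; positivity
          · rw [← inv_inv (‖a‖ ^ 2)]
            exact inv_anti₀ ht ha
        have h3 : ‖a‖ ≤ Real.sqrt t⁻¹ := by
          rw [← Real.sqrt_sq (norm_nonneg a)]
          exact Real.sqrt_le_sqrt h2
        have h4 : Real.sqrt t⁻¹ = t ^ (-(1:ℝ)/2) := by
          rw [Real.sqrt_eq_rpow, ← Real.rpow_neg_one t, ← Real.rpow_mul ht.le]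
          norm_num
        linarith
      calc ν {a : EuclideanSpace ℝ (Fin 3) | t ≤ (‖a‖ ^ 2)⁻¹}
          ≤ volume (closedBall (0 : EuclideanSpace ℝ (Fin 3)) (t ^ (-(1:ℝ)/2))) :=
            le_trans (Measure.restrict_le_self _) (measure_mono hsub)
        _ = ENNReal.ofReal ((t ^ (-(1:ℝ)/2)) ^ Module.finrank ℝ (EuclideanSpace ℝ (Fin 3))) * mB :=
            volume.addHaar_closedBall _ (by positivity)
        _ = ENNReal.ofReal (t ^ (-(3:ℝ)/2)) * mB := by
            congr 1
            rw [finrank_euclideanSpace_fin, ← Real.rpow_natCast (t ^ (-(1:ℝ)/2)) 3,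
              ← Real.rpow_mul ht.le]
            norm_num
    have hsplit : ∫⁻ t in Ioi (0:ℝ), ν {a : EuclideanSpace ℝ (Fin 3) | t ≤ (‖a‖ ^ 2)⁻¹}
        ≤ (∫⁻ t in Ioc (0:ℝ) 1, ν {a : EuclideanSpace ℝ (Fin 3) | t ≤ (‖a‖ ^ 2)⁻¹})
          + ∫⁻ t in Ioi (1:ℝ), ν {a : EuclideanSpace ℝ (Fin 3) | t ≤ (‖a‖ ^ 2)⁻¹} :=
      le_trans (lintegral_mono_set Ioi_subset_Ioc_union_Ioi) (lintegral_union_le _ _ _)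
    refine lt_of_le_of_lt hsplit (ENNReal.add_lt_top.2 ⟨?_, ?_⟩)
    · calc ∫⁻ t in Ioc (0:ℝ) 1, ν {a : EuclideanSpace ℝ (Fin 3) | t ≤ (‖a‖ ^ 2)⁻¹}
          ≤ ∫⁻ _ in Ioc (0:ℝ) 1, ν univ := by
            refine setLIntegral_mono' measurableSet_Ioc fun t _ => measure_mono (subset_univ _)
        _ = ν univ * volume (Ioc (0:ℝ) 1) := by rw [setLIntegral_const]
        _ < ⊤ := by
            refine ENNReal.mul_lt_top ?_ (by simp)
            rw [hν, Measure.restrict_apply_univ]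
            exact measure_closedBall_lt_top
    · calc ∫⁻ t in Ioi (1:ℝ), ν {a : EuclideanSpace ℝ (Fin 3) | t ≤ (‖a‖ ^ 2)⁻¹}
          ≤ ∫⁻ t in Ioi (1:ℝ), ENNReal.ofReal (t ^ (-(3:ℝ)/2)) * mB := by
            refine setLIntegral_mono' measurableSet_Ioi fun t ht => hbound t (lt_trans one_pos ht)
        _ = (∫⁻ t in Ioi (1:ℝ), ENNReal.ofReal (t ^ (-(3:ℝ)/2))) * mB := by
            rw [lintegral_mul_const' _ _ measure_ball_lt_top.ne]
        _ < ⊤ := by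
            refine ENNReal.mul_lt_top ?_ measure_ball_lt_top
            exact (integrableOn_Ioi_rpow_of_lt (by norm_num) one_pos).setLIntegral_lt_top

lemma aux_indicator_eq (x : EuclideanSpace ℝ (Fin 3)) :
    (closedBall x 7).indicator (fun y : EuclideanSpace ℝ (Fin 3) => (‖x - y‖ ^ 2)⁻¹)
    = fun y => (closedBall (0 : EuclideanSpace ℝ (Fin 3)) 7).indicator
        (fun z => (‖z‖ ^ 2)⁻¹) (y - x) := by
  funext y
  have hmem : y ∈ closedBall x 7 ↔ (y - x) ∈ closedBall (0 : EuclideanSpace ℝ (Fin 3)) 7 := by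
    simp [mem_closedBall, dist_eq_norm]
  by_cases h : y ∈ closedBall x 7
  · rw [indicator_of_mem h, indicator_of_mem (hmem.1 h), norm_sub_rev]
  · rw [indicator_of_notMem h, indicator_of_notMem (fun hc => h (hmem.2 hc))]

lemma aux_trans_integrable (x : EuclideanSpace ℝ (Fin 3)) :
    IntegrableOn (fun y : EuclideanSpace ℝ (Fin 3) => (‖x - y‖ ^ 2)⁻¹) (closedBall x 7) := by
  rw [← integrable_indicator_iff measurableSet_closedBall, aux_indicator_eq]
  exact (((integrable_indicator_iff measurableSet_closedBall).2
    (aux_integrableOn 7))).comp_sub_right x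

lemma aux_trans_integral (x : EuclideanSpace ℝ (Fin 3)) :
    ∫ y in closedBall x 7, (‖x - y‖ ^ 2)⁻¹
      = ∫ z in closedBall (0 : EuclideanSpace ℝ (Fin 3)) 7, (‖z‖ ^ 2)⁻¹ := by
  rw [← integral_indicator measurableSet_closedBall, aux_indicator_eq,
    integral_sub_right_eq_self _ x, integral_indicator measurableSet_closedBall]


/-- for a radial `C¹` density profile `ρ₀` supported in `B₁` with Hölder
continuous derivative, whose potential satisfies `U₀'(r) ≥ Cr` on `[0,4]`, the operator
`(KΛ)(x) = -(1/U₀'(|x|)) ∫_{B₃} (1/|x-y| - 1/|y|) ρ₀'(|y|) Λ(y) dy` is bounded: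
`|(KΛ)(x)| ≤ C' ‖Λ‖_∞` on `B₄ \ {0}`, with `C'` depending only on `ρ₀, U₀`. -/
theorem stmt13 (ρ₀ : ℝ → ℝ) (hρC1 : ContDiff ℝ 1 ρ₀)
    (hρsupp : ∀ r : ℝ, 1 ≤ r → ρ₀ r = 0)
    (Ch α : ℝ) (hα : 0 < α) (hα1 : α ≤ 1)
    (hHol : ∀ r s : ℝ, |deriv ρ₀ r - deriv ρ₀ s| ≤ Ch * |r - s| ^ α)
    (U₀' : ℝ → ℝ) (C : ℝ) (hC : 0 < C)
    (hU' : ∀ r : ℝ, 0 < r → U₀' r = (4 * π / r^2) * ∫ s in (0:ℝ)..r, s^2 * ρ₀ s)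
    (hU'low : ∀ r ∈ Set.Icc (0:ℝ) 4, C * r ≤ U₀' r)
    (K : (EuclideanSpace ℝ (Fin 3) → ℝ) → (EuclideanSpace ℝ (Fin 3) → ℝ))
    (hK : ∀ (Λ : EuclideanSpace ℝ (Fin 3) → ℝ) (x : EuclideanSpace ℝ (Fin 3)), x ≠ 0 →
      K Λ x = -(1 / U₀' ‖x‖) *
        ∫ y in closedBall (0 : EuclideanSpace ℝ (Fin 3)) 3,
          (1 / ‖x - y‖ - 1 / ‖y‖) * deriv ρ₀ ‖y‖ * Λ y) :
    ∃ C' : ℝ, 0 < C' ∧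
      ∀ Λ : EuclideanSpace ℝ (Fin 3) → ℝ,
        ContinuousOn Λ (closedBall (0 : EuclideanSpace ℝ (Fin 3)) 4) →
        ∀ N : ℝ, (∀ y ∈ closedBall (0 : EuclideanSpace ℝ (Fin 3)) 4, |Λ y| ≤ N) →
        ∀ x ∈ closedBall (0 : EuclideanSpace ℝ (Fin 3)) 4 \ {0},
          |K Λ x| ≤ C' * N := by
  classical
  -- bound on deriv ρ₀ on [0,3]
  obtain ⟨M, hM⟩ : ∃ M : ℝ, ∀ r ∈ Set.Icc (0:ℝ) 3, |deriv ρ₀ r| ≤ M := by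
    obtain ⟨M, hM⟩ := (isCompact_Icc (a := (0:ℝ)) (b := 3)).exists_bound_of_continuousOn
      ((hρC1.continuous_deriv le_rfl).continuousOn)
    exact ⟨M, fun r hr => by simpa using hM r hr⟩
  have hM0 : 0 ≤ M := le_trans (abs_nonneg _) (hM 0 ⟨le_rfl, by norm_num⟩)
  set I₀ : ℝ := ∫ z in closedBall (0 : EuclideanSpace ℝ (Fin 3)) 7, (‖z‖ ^ 2)⁻¹ with hI₀def
  have hI₀0 : 0 ≤ I₀ := setIntegral_nonneg measurableSet_closedBall (fun z _ => by positivity)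
  refine ⟨M * I₀ / C + 1, by positivity, ?_⟩
  intro Λ hΛc N hN x hx
  obtain ⟨hx4, hx0⟩ : ‖x‖ ≤ 4 ∧ x ≠ 0 := ⟨mem_closedBall_zero_iff.1 hx.1, by simpa using hx.2⟩
  have hxpos : 0 < ‖x‖ := norm_pos_iff.2 hx0
  have hN0 : 0 ≤ N := le_trans (abs_nonneg _) (hN 0 (by simp))
  have hU : C * ‖x‖ ≤ U₀' ‖x‖ := hU'low ‖x‖ ⟨norm_nonneg _, hx4⟩
  have hUpos : 0 < U₀' ‖x‖ := lt_of_lt_of_le (by positivity) hU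
  set f : EuclideanSpace ℝ (Fin 3) → ℝ :=
    fun y => (1 / ‖x - y‖ - 1 / ‖y‖) * deriv ρ₀ ‖y‖ * Λ y with hfdef
  set g : EuclideanSpace ℝ (Fin 3) → ℝ :=
    fun y => M * N * ‖x‖ / 2 * ((‖x - y‖ ^ 2)⁻¹ + (‖y‖ ^ 2)⁻¹) with hgdef
  set B₃ := closedBall (0 : EuclideanSpace ℝ (Fin 3)) 3 with hB₃
  have hsub37 : B₃ ⊆ closedBall x 7 := by
    intro y hy
    rw [mem_closedBall, dist_eq_norm]
    calc ‖y - x‖ ≤ ‖y‖ + ‖x‖ := norm_sub_le _ _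
      _ ≤ 3 + 4 := add_le_add (mem_closedBall_zero_iff.1 hy) hx4
      _ = 7 := by norm_num
  have hgint : IntegrableOn g B₃ := by
    refine Integrable.const_mul ?_ _
    exact ((aux_trans_integrable x).mono_set hsub37).add
      ((aux_integrableOn 3))
  -- a.e. pointwise bound
  have hae : ∀ᵐ y ∂(volume.restrict B₃), ‖f y‖ ≤ g y := by
    have h0 : ∀ᵐ y : EuclideanSpace ℝ (Fin 3) ∂volume, y ∉ ({0, x} : Set (EuclideanSpace ℝ (Fin 3))) := by
      have h : volume ({0, x} : Set (EuclideanSpace ℝ (Fin 3))) = 0 :=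
        (Set.toFinite _).measure_zero _
      exact measure_eq_zero_iff_ae_notMem.mp h
    filter_upwards [ae_restrict_mem measurableSet_closedBall, ae_restrict_of_ae h0]
      with y hy hy'
    simp only [Set.mem_insert_iff, Set.mem_singleton_iff, not_or] at hy'
    obtain ⟨hy0, hyx⟩ := hy'
    set a : ℝ := ‖x - y‖ with ha
    set b : ℝ := ‖y‖ with hb
    have hapos : 0 < a := norm_pos_iff.2 (sub_ne_zero.2 fun h => hyx h.symm)
    have hbpos : 0 < b := norm_pos_iff.2 hy0
    have hdiff : |1 / a - 1 / b| ≤ ‖x‖ * (1 / a * (1 / b)) := by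
      rw [div_sub_div _ _ hapos.ne' hbpos.ne', abs_div, abs_of_pos (mul_pos hapos hbpos)]
      have hnum : |1 * b - a * 1| ≤ ‖x‖ := by
        have := abs_norm_sub_norm_le y (y - x)
        simp only [sub_sub_cancel] at this
        calc |1 * b - a * 1| = |b - a| := by ring_nf
          _ = |‖y‖ - ‖y - x‖| := by rw [ha, hb, norm_sub_rev x y]
          _ ≤ ‖x‖ := this
      calc |1 * b - a * 1| / (a * b) ≤ ‖x‖ / (a * b) := by
            exact div_le_div_of_nonneg_right hnum (by positivity) |>.trans_eq rfl
        _ = ‖x‖ * (1 / a * (1 / b)) := by field_simp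
    have hamgm : 1 / a * (1 / b) ≤ (a ^ 2)⁻¹ / 2 + (b ^ 2)⁻¹ / 2 := by
      have key : (a ^ 2)⁻¹ / 2 + (b ^ 2)⁻¹ / 2 - 1 / a * (1 / b) = (1 / a - 1 / b) ^ 2 / 2 := by
        field_simp
        ring
      nlinarith [sq_nonneg (1 / a - 1 / b)]
    have hd : |deriv ρ₀ b| ≤ M := hM b ⟨norm_nonneg _, mem_closedBall_zero_iff.1 hy⟩
    have hL : |Λ y| ≤ N := hN y (closedBall_subset_closedBall (by norm_num) hy)
    calc ‖f y‖ = |1 / a - 1 / b| * |deriv ρ₀ b| * |Λ y| := by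
          rw [hfdef]; simp [Real.norm_eq_abs, abs_mul, ha, hb]
      _ ≤ (‖x‖ * (1 / a * (1 / b))) * M * N := by
          gcongr
      _ ≤ (‖x‖ * ((a ^ 2)⁻¹ / 2 + (b ^ 2)⁻¹ / 2)) * M * N := by
          gcongr
      _ = g y := by rw [hgdef]; ring
  -- integral bound
  have hIbound : |∫ y in B₃, f y| ≤ M * N * I₀ * ‖x‖ := by
    have h1 : |∫ y in B₃, f y| ≤ ∫ y in B₃, ‖f y‖ := by
      simpa [Real.norm_eq_abs] using
        norm_integral_le_integral_norm (μ := volume.restrict B₃) f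
    have h2 : ∫ y in B₃, ‖f y‖ ≤ ∫ y in B₃, g y :=
      integral_mono_of_nonneg (ae_of_all _ fun y => norm_nonneg _) hgint hae
    have h3 : ∫ y in B₃, g y ≤ M * N * ‖x‖ / 2 * (2 * I₀) := by
      have hgeq : ∫ y in B₃, g y
          = M * N * ‖x‖ / 2 * ∫ y in B₃, ((‖x - y‖ ^ 2)⁻¹ + (‖y‖ ^ 2)⁻¹) :=
        integral_const_mul _ _
      rw [hgeq]
      refine mul_le_mul_of_nonneg_left ?_ (by positivity)
      rw [integral_add ((aux_trans_integrable x).mono_set hsub37) (aux_integrableOn 3)]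
      have hA : ∫ y in B₃, (‖x - y‖ ^ 2)⁻¹ ≤ I₀ := by
        rw [hI₀def, ← aux_trans_integral x]
        exact setIntegral_mono_set (aux_trans_integrable x)
          (ae_of_all _ fun y => by positivity) (HasSubset.Subset.eventuallyLE hsub37)
      have hB : ∫ y in B₃, (‖y‖ ^ 2)⁻¹ ≤ I₀ := by
        rw [hI₀def]
        exact setIntegral_mono_set (aux_integrableOn 7)
          (ae_of_all _ fun y => by positivity)
          (HasSubset.Subset.eventuallyLE (closedBall_subset_closedBall (by norm_num)))
      linarith
    calc |∫ y in B₃, f y| ≤ ∫ y in B₃, g y := le_trans h1 h2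
      _ ≤ M * N * ‖x‖ / 2 * (2 * I₀) := h3
      _ = M * N * I₀ * ‖x‖ := by ring
  -- conclusion
  rw [hK Λ x hx0]
  rw [abs_mul, abs_neg, abs_div, abs_one, abs_of_pos hUpos]
  calc 1 / U₀' ‖x‖ * |∫ y in B₃, f y| ≤ 1 / (C * ‖x‖) * (M * N * I₀ * ‖x‖) := by
        refine mul_le_mul ?_ hIbound (abs_nonneg _) (by positivity)
        exact one_div_le_one_div_of_le (by positivity) hU
    _ = M * I₀ / C * N := by field_simp
    _ ≤ (M * I₀ / C + 1) * N := by nlinarith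
end

section
/- Let Λ₀₁: [0,3] → ℝ be continuous and satisfy Λ₀₁(r) = -(4π/(r U₀'(r))) ∫₀^r ρ₀'(s) s (s - r) Λ₀₁(s) ds for r ∈ (0,3], where ρ₀' is bounded and r U₀'(r) ≥ C r² for some C > 0. Then Λ₀₁ ≡ 0 on [0,3]. -/
open Real MeasureTheory

/-- if `Λ₀₁` is continuous on `[0,3]` and satisfies
`Λ₀₁(r) = -(4π/(r U₀'(r))) ∫₀^r ρ₀'(s) s (s - r) Λ₀₁(s) ds` for `r ∈ (0,3]`, where
`ρ₀'` is bounded and `r U₀'(r) ≥ C r²`, then `Λ₀₁ ≡ 0` on `[0,3]`. -/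
theorem stmt15 (Λ : ℝ → ℝ) (ρ₀' U₀' : ℝ → ℝ) (C M : ℝ) (hC : 0 < C)
    (hΛc : ContinuousOn Λ (Set.Icc (0:ℝ) 3))
    (hρb : ∀ s : ℝ, |ρ₀' s| ≤ M)
    (hU'low : ∀ r : ℝ, 0 < r → C * r^2 ≤ r * U₀' r)
    (heq : ∀ r ∈ Set.Ioc (0:ℝ) 3,
      Λ r = -(4 * π / (r * U₀' r)) * ∫ s in (0:ℝ)..r, ρ₀' s * s * (s - r) * Λ s) :
    ∀ r ∈ Set.Icc (0:ℝ) 3, Λ r = 0 := by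
  have hπ : 0 < π := Real.pi_pos
  have hM0 : 0 ≤ M := le_trans (abs_nonneg _) (hρb 0)
  set K : ℝ := 4 * π / C * M + 1 with hKdef
  have hK0 : 0 < K := by positivity
  have hCK : 4 * π * M ≤ C * K := by
    have : C * K = 4 * π * M + C := by
      rw [hKdef]; field_simp
    linarith
  -- maximum of |Λ| on [0,3]
  obtain ⟨r₀, hr₀, hSmax⟩ := isCompact_Icc.exists_isMaxOn ⟨0, by norm_num⟩ hΛc.abs
  set S : ℝ := |Λ r₀| with hSdef
  have hS : ∀ y ∈ Set.Icc (0:ℝ) 3, |Λ y| ≤ S := fun y hy => hSmax hy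
  have hS0 : 0 ≤ S := abs_nonneg _
  -- key iteration bound
  have key : ∀ n : ℕ, ∀ r ∈ Set.Ioc (0:ℝ) 3, |Λ r| ≤ S * K ^ n * r ^ n / n.factorial := by
    intro n
    induction n with
    | zero =>
      intro r hr
      simpa using hS r (Set.Ioc_subset_Icc_self hr)
    | succ n ih =>
      intro r hr
      obtain ⟨hr0, hr3⟩ := hr
      have hrU : 0 < r * U₀' r := lt_of_lt_of_le (by positivity) (hU'low r hr0)
      have hA : ∀ s ∈ Set.Ioc (0:ℝ) r, |Λ s| ≤ S * K ^ n / n.factorial * s ^ n := by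
        intro s hs
        have := ih s ⟨hs.1, hs.2.trans hr3⟩
        linarith [this, (by ring : S * K ^ n * s ^ n / n.factorial
          = S * K ^ n / n.factorial * s ^ n)]
      -- bound the integral
      have hJ : ∫ s in (0:ℝ)..r, s ^ (n+1) * (r - s)
          = r ^ (n+3) / (((n:ℝ)+2) * ((n:ℝ)+3)) := by
        have hrw : ∀ s : ℝ, s ^ (n+1) * (r - s) = r * s ^ (n+1) - s ^ (n+2) := by
          intro s; ring
        simp_rw [hrw]
        rw [intervalIntegral.integral_sub (f := fun s : ℝ => r * s ^ (n+1)) (g := fun s : ℝ => s ^ (n+2))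
          (((continuous_const.mul (continuous_pow _)) : Continuous fun s : ℝ => r * s ^ (n+1)).intervalIntegrable _ _)
          ((continuous_pow _).intervalIntegrable _ _),
          intervalIntegral.integral_const_mul, integral_pow, integral_pow]
        have h2 : ((n:ℝ) + 2) ≠ 0 := by positivity
        have h3 : ((n:ℝ) + 3) ≠ 0 := by positivity
        push_cast
        field_simp
        ring
      set g : ℝ → ℝ := fun s => M * (S * K ^ n / n.factorial) * (s ^ (n+1) * (r - s)) with hg
      have hgint : ∫ s in (0:ℝ)..r, g s
          = M * (S * K ^ n / n.factorial) * (r ^ (n+3) / (((n:ℝ)+2) * ((n:ℝ)+3))) := by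
        rw [hg, intervalIntegral.integral_const_mul, hJ]
      have hgnn : 0 ≤ ∫ s in (0:ℝ)..r, g s := by
        rw [hgint]; positivity
      have hI : |∫ s in (0:ℝ)..r, ρ₀' s * s * (s - r) * Λ s|
          ≤ M * (S * K ^ n / n.factorial) * (r ^ (n+3) / (((n:ℝ)+2) * ((n:ℝ)+3))) := by
        rw [← hgint, ← abs_of_nonneg hgnn]
        refine intervalIntegral.norm_integral_le_abs_of_norm_le
          (f := fun s => ρ₀' s * s * (s - r) * Λ s) (g := g) ?_ ?_
        · refine (ae_restrict_mem measurableSet_uIoc).mono ?_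
          intro s hs
          rw [Set.uIoc_of_le hr0.le] at hs
          have hs0 : 0 < s := hs.1
          have hsr : s ≤ r := hs.2
          have hΛs := hA s ⟨hs0, hsr⟩
          have h1 : ‖ρ₀' s * s * (s - r) * Λ s‖ = |ρ₀' s| * s * (r - s) * |Λ s| := by
            rw [Real.norm_eq_abs, abs_mul, abs_mul, abs_mul, abs_of_pos hs0,
              abs_sub_comm, abs_of_nonneg (by linarith : (0:ℝ) ≤ r - s)]
          rw [h1, hg]
          calc |ρ₀' s| * s * (r - s) * |Λ s|
              ≤ M * s * (r - s) * (S * K ^ n / n.factorial * s ^ n) := by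
                have hb1 : |ρ₀' s| * s * (r - s) ≤ M * s * (r - s) :=
                  mul_le_mul_of_nonneg_right
                    (mul_le_mul_of_nonneg_right (hρb s) hs0.le) (by linarith)
                exact mul_le_mul hb1 hΛs (abs_nonneg _)
                  (mul_nonneg (mul_nonneg hM0 hs0.le) (by linarith))
            _ = M * (S * K ^ n / n.factorial) * (s ^ (n+1) * (r - s)) := by ring
        · exact (continuous_const.mul ((continuous_pow _).mul
            (continuous_const.sub continuous_id))).intervalIntegrable _ _
      -- combine
      rw [heq r ⟨hr0, hr3⟩, abs_mul, abs_neg,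
        abs_of_pos (by positivity : (0:ℝ) < 4 * π / (r * U₀' r))]
      have hcoef : 4 * π / (r * U₀' r) ≤ 4 * π / (C * r ^ 2) :=
        div_le_div_of_nonneg_left (by positivity) (by positivity) (hU'low r hr0)
      calc 4 * π / (r * U₀' r) * |∫ s in (0:ℝ)..r, ρ₀' s * s * (s - r) * Λ s|
          ≤ 4 * π / (C * r ^ 2)
            * (M * (S * K ^ n / n.factorial) * (r ^ (n+3) / (((n:ℝ)+2) * ((n:ℝ)+3)))) := by
            gcongr
        _ ≤ S * K ^ (n+1) * r ^ (n+1) / (n+1).factorial := by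
            have h1 : (n:ℝ) + 1 ≤ ((n:ℝ) + 2) * ((n:ℝ) + 3) := by
              nlinarith [Nat.cast_nonneg (α := ℝ) n]
            have hfac : 4 * π * M * ((n:ℝ) + 1) ≤ C * K * (((n:ℝ) + 2) * ((n:ℝ) + 3)) :=
              mul_le_mul hCK h1 (by positivity) (by positivity)
            have hmul := mul_le_mul_of_nonneg_right hfac
              (show (0:ℝ) ≤ S * K ^ n * r ^ (n+1) by positivity)
            have hfs : ((n+1).factorial : ℝ) = ((n:ℝ) + 1) * n.factorial := by
              rw [Nat.factorial_succ]; push_cast; ring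
            have hnf : (0:ℝ) < (n.factorial : ℝ) := by positivity
            have hL : 4 * π / (C * r ^ 2)
                * (M * (S * K ^ n / (n.factorial:ℝ)) * (r ^ (n+3) / (((n:ℝ)+2) * ((n:ℝ)+3))))
                = (4 * π * M * (S * K ^ n * r ^ (n+1)))
                  / (C * (n.factorial:ℝ) * (((n:ℝ)+2) * ((n:ℝ)+3))) := by
              have h2 : ((n:ℝ) + 2) ≠ 0 := by positivity
              have h3 : ((n:ℝ) + 3) ≠ 0 := by positivity
              field_simp
              ring
            rw [hL, div_le_div_iff₀ (by positivity) (by positivity), hfs]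
            have e1 : 4 * π * M * (S * K ^ n * r ^ (n+1)) * (((n:ℝ)+1) * (n.factorial:ℝ))
                = 4 * π * M * ((n:ℝ)+1) * (S * K ^ n * r ^ (n+1)) * (n.factorial:ℝ) := by ring
            have e2 : S * K ^ (n+1) * r ^ (n+1) * (C * (n.factorial:ℝ) * (((n:ℝ)+2) * ((n:ℝ)+3)))
                = C * K * (((n:ℝ)+2) * ((n:ℝ)+3)) * (S * K ^ n * r ^ (n+1)) * (n.factorial:ℝ) := by
              ring
            rw [e1, e2]
            exact mul_le_mul_of_nonneg_right hmul hnf.le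
  -- conclude Λ = 0 on (0,3]
  have hzero : ∀ r ∈ Set.Ioc (0:ℝ) 3, Λ r = 0 := by
    intro r hr
    have hb : ∀ n : ℕ, |Λ r| ≤ S * ((3*K) ^ n / n.factorial) := by
      intro n
      refine (key n r hr).trans ?_
      have h1 : S * K ^ n * r ^ n / n.factorial = S * ((K*r) ^ n / n.factorial) := by
        rw [mul_pow]; ring
      rw [h1]
      have hrpos : 0 < r := hr.1
      have h2 : (K*r) ^ n ≤ (3*K) ^ n :=
        pow_le_pow_left₀ (by positivity) (by nlinarith [hr.2, hK0, hrpos]) n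
      gcongr
    have hlim : Filter.Tendsto (fun n : ℕ => S * ((3*K) ^ n / n.factorial))
        Filter.atTop (nhds 0) := by
      simpa using (FloorSemiring.tendsto_pow_div_factorial_atTop (3*K)).const_mul S
    have h0 : |Λ r| ≤ 0 := ge_of_tendsto hlim (Filter.Eventually.of_forall hb)
    exact abs_eq_zero.mp (le_antisymm h0 (abs_nonneg _))
  -- extend to r = 0 by continuity
  intro r hr
  rcases eq_or_lt_of_le hr.1 with h | h
  · have hc : ContinuousWithinAt Λ (Set.Icc (0:ℝ) 3) 0 := hΛc 0 (by norm_num)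
    have hmem : Set.Ioc (0:ℝ) 3 ∈ nhdsWithin (0:ℝ) (Set.Ioi 0) :=
      Ioc_mem_nhdsGT_of_mem (by norm_num : (0:ℝ) ∈ Set.Ico (0:ℝ) 3)
    have hle : nhdsWithin (0:ℝ) (Set.Ioi 0) ≤ nhdsWithin (0:ℝ) (Set.Icc (0:ℝ) 3) :=
      (nhdsWithin_le_of_mem hmem).trans (nhdsWithin_mono _ Set.Ioc_subset_Icc_self)
    have h1 : Filter.Tendsto Λ (nhdsWithin (0:ℝ) (Set.Ioi 0)) (nhds (Λ 0)) :=
      hc.tendsto.mono_left hle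
    have h2 : Filter.Tendsto Λ (nhdsWithin (0:ℝ) (Set.Ioi 0)) (nhds 0) := by
      refine Filter.Tendsto.congr' ?_ tendsto_const_nhds
      filter_upwards [hmem] with x hx using (hzero x hx).symm
    rw [← h]
    exact tendsto_nhds_unique h1 h2
  · exact hzero r ⟨h, hr.2⟩
end

section
/- Let ρ₀: [0,3] → [0,∞) be C¹, nonincreasing (ρ₀' ≤ 0), supported in [0,1], and set U₀'(r) = (4π/r²)∫₀^r s²ρ₀(s) ds. Fix n ≥ 2 and suppose Λ: (0,3] → ℝ is continuous and bounded with Λ(r) = -(4π/((2n+1)U₀'(r))) [∫₀^r s²ρ₀'(s)(s^n/r^{n+1})Λ(s) ds + ∫_r^3 s²ρ₀'(s)(r^n/s^{n+1})Λ(s) ds]. Then ‖Λ‖_∞ ≤ (3/(2n+1))‖Λ‖_∞; in particular, since 2n+1 > 3, Λ ≡ 0. -/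
open Real MeasureTheory


lemma aux_integrable (c Λ : ℝ → ℝ) (a b : ℝ) (hab : a ≤ b) (ha : 0 ≤ a) (hb : b ≤ 3)
    (hc : ContinuousOn c (Set.Icc a b)) (hΛ : ContinuousOn Λ (Set.Ioc (0:ℝ) 3))
    (Bd : ℝ) (hΛb : ∀ s ∈ Set.Ioc (0:ℝ) 3, |Λ s| ≤ Bd) :
    IntervalIntegrable (fun s => c s * Λ s) volume a b := by
  rw [intervalIntegrable_iff_integrableOn_Ioc_of_le hab]
  have hsub : Set.Ioc a b ⊆ Set.Ioc (0:ℝ) 3 := Set.Ioc_subset_Ioc ha hb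
  obtain ⟨C, hC⟩ := (isCompact_Icc (a := a) (b := b)).exists_bound_of_continuousOn hc
  have hC0 : 0 ≤ C := le_trans (norm_nonneg (c a)) (hC a ⟨le_rfl, hab⟩)
  have hBd0 : 0 ≤ Bd := le_trans (abs_nonneg _) (hΛb 1 ⟨one_pos, by norm_num⟩)
  have hmeas : AEStronglyMeasurable (fun s => c s * Λ s) (volume.restrict (Set.Ioc a b)) := by
    exact ((hc.mono Set.Ioc_subset_Icc_self).aestronglyMeasurable measurableSet_Ioc).mul
      ((hΛ.mono hsub).aestronglyMeasurable measurableSet_Ioc)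
  refine MeasureTheory.Integrable.mono' (g := fun _ => C * Bd) ?_ hmeas ?_
  · exact (integrableOn_const measure_Ioc_lt_top.ne)
  · filter_upwards [MeasureTheory.ae_restrict_mem measurableSet_Ioc] with s hs
    have h1 := hC s (Set.Ioc_subset_Icc_self hs)
    have h2 := hΛb s (hsub hs)
    rw [Real.norm_eq_abs] at h1 ⊢
    rw [abs_mul]
    exact mul_le_mul h1 h2 (abs_nonneg _) hC0


/-- vanishing of the higher spherical-harmonic modes (`n ≥ 2`): a bounded
continuous solution `Λ` of the mode equation satisfies `‖Λ‖_∞ ≤ (3/(2n+1))‖Λ‖_∞`,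
hence (since `2n+1 > 3`) `Λ ≡ 0`. -/
theorem stmt17 (ρ₀ : ℝ → ℝ) (hρC1 : ContDiff ℝ 1 ρ₀)
    (hρnn : ∀ r : ℝ, 0 ≤ r → 0 ≤ ρ₀ r)
    (hρmono : ∀ r : ℝ, 0 ≤ r → deriv ρ₀ r ≤ 0)
    (hρsupp : ∀ r : ℝ, 1 ≤ r → ρ₀ r = 0)
    (U₀' : ℝ → ℝ)
    (hU' : ∀ r : ℝ, 0 < r → U₀' r = (4 * π / r^2) * ∫ s in (0:ℝ)..r, s^2 * ρ₀ s)
    (n : ℕ) (hn : 2 ≤ n)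
    (Λ : ℝ → ℝ) (hΛc : ContinuousOn Λ (Set.Ioc (0:ℝ) 3))
    (Bd : ℝ) (hΛb : ∀ r ∈ Set.Ioc (0:ℝ) 3, |Λ r| ≤ Bd)
    (heq : ∀ r ∈ Set.Ioc (0:ℝ) 3,
      Λ r = -(4 * π / ((2 * (n:ℝ) + 1) * U₀' r)) *
        ((∫ s in (0:ℝ)..r, s^2 * deriv ρ₀ s * (s^n / r^(n+1)) * Λ s) +
         (∫ s in r..(3:ℝ), s^2 * deriv ρ₀ s * (r^n / s^(n+1)) * Λ s))) :
    (⨆ r : Set.Ioc (0:ℝ) 3, |Λ (r : ℝ)|)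
       ≤ (3 / (2 * (n:ℝ) + 1)) * (⨆ r : Set.Ioc (0:ℝ) 3, |Λ (r : ℝ)|) ∧
    ∀ r ∈ Set.Ioc (0:ℝ) 3, Λ r = 0 := by
  haveI : Nonempty (Set.Ioc (0:ℝ) 3) := ⟨⟨1, by norm_num⟩⟩
  obtain ⟨m, rfl⟩ : ∃ m, n = 2 + m := ⟨n - 2, by omega⟩
  set n := 2 + m with hnval
  set M := ⨆ r : Set.Ioc (0:ℝ) 3, |Λ (r : ℝ)| with hMdef
  have hBdd : BddAbove (Set.range fun r : Set.Ioc (0:ℝ) 3 => |Λ (r : ℝ)|) := by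
    refine ⟨Bd, ?_⟩; rintro _ ⟨r, rfl⟩; exact hΛb r r.2
  have hle : ∀ s ∈ Set.Ioc (0:ℝ) 3, |Λ s| ≤ M := fun s hs => le_ciSup hBdd ⟨s, hs⟩
  have hM0 : 0 ≤ M := le_trans (abs_nonneg _) (hle 1 ⟨one_pos, by norm_num⟩)
  have hπ := Real.pi_pos
  have hρ'cont : Continuous (deriv ρ₀) := hρC1.continuous_deriv le_rfl
  have hρcont : Continuous ρ₀ := hρC1.continuous
  have main : ∀ r ∈ Set.Ioc (0:ℝ) 3, |Λ r| ≤ 3 / (2 * (n:ℝ) + 1) * M := by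
    intro r hr
    obtain ⟨hr0, hr3⟩ := hr
    have hrne : r ≠ 0 := hr0.ne'
    set I := ∫ s in (0:ℝ)..r, s^2 * ρ₀ s with hI
    have hInn : 0 ≤ I := intervalIntegral.integral_nonneg hr0.le
      (fun s hs => mul_nonneg (sq_nonneg s) (hρnn s hs.1))
    rcases hInn.eq_or_lt with h0 | hIpos
    · have hU0 : U₀' r = 0 := by rw [hU' r hr0, ← hI, ← h0, mul_zero]
      rw [heq r ⟨hr0, hr3⟩, hU0]
      simp only [mul_zero, div_zero, neg_zero, zero_mul, abs_zero]
      positivity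
    · have hU : U₀' r = 4 * π / r^2 * I := by rw [hU' r hr0, hI]
      have hUpos : 0 < U₀' r := by rw [hU]; positivity
      -- integrability of the two integrands
      have hc1 : Continuous (fun s : ℝ => s^2 * deriv ρ₀ s * (s^n / r^(n+1))) := by
        exact ((continuous_pow 2).mul hρ'cont).mul ((continuous_pow n).div_const _)
      have hint1 : IntervalIntegrable
          (fun s => s^2 * deriv ρ₀ s * (s^n / r^(n+1)) * Λ s) volume 0 r :=
        aux_integrable _ Λ 0 r hr0.le le_rfl hr3 hc1.continuousOn hΛc Bd hΛb
      have hc2 : ContinuousOn (fun s : ℝ => s^2 * deriv ρ₀ s * (r^n / s^(n+1)))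
          (Set.Icc r 3) := by
        refine (((continuous_pow 2).mul hρ'cont).continuousOn).mul
          (ContinuousOn.div continuousOn_const (continuousOn_pow _) ?_)
        intro s hs
        exact pow_ne_zero _ (lt_of_lt_of_le hr0 hs.1).ne'
      have hint2 : IntervalIntegrable
          (fun s => s^2 * deriv ρ₀ s * (r^n / s^(n+1)) * Λ s) volume r 3 :=
        aux_integrable _ Λ r 3 hr3 hr0.le le_rfl hc2 hΛc Bd hΛb
      -- dominating functions
      have hg1int : IntervalIntegrable (fun s => -deriv ρ₀ s * s^3 * (M / r^2)) volume 0 r :=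
        ((hρ'cont.neg.mul (continuous_pow 3)).mul continuous_const).intervalIntegrable _ _
      have hg2int : IntervalIntegrable (fun s => -deriv ρ₀ s * (r * M)) volume r 3 :=
        (hρ'cont.neg.mul continuous_const).intervalIntegrable _ _
      -- pointwise bounds
      have bound1 : ∀ s ∈ Set.Icc (0:ℝ) r,
          |s^2 * deriv ρ₀ s * (s^n / r^(n+1)) * Λ s| ≤ -deriv ρ₀ s * s^3 * (M / r^2) := by
        rintro s ⟨hs0, hsr⟩
        rcases hs0.eq_or_lt with rfl | hs
        · norm_num
        have hΛs : |Λ s| ≤ M := hle s ⟨hs, le_trans hsr hr3⟩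
        have hd : 0 ≤ -deriv ρ₀ s := neg_nonneg.2 (hρmono s hs.le)
        have key : s^2 * (s^n / r^(n+1)) ≤ s^3 / r^2 := by
          rw [mul_div_assoc', div_le_div_iff₀ (by positivity) (by positivity)]
          have h1 : s^(m+1) ≤ r^(m+1) := pow_le_pow_left₀ hs.le hsr _
          calc s^2 * s^n * r^2 = s^(m+1) * (s^3 * r^2) := by rw [hnval]; ring
            _ ≤ r^(m+1) * (s^3 * r^2) := by
                exact mul_le_mul_of_nonneg_right h1 (by positivity)
            _ = s^3 * r^(n+1) := by rw [hnval]; ring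
        calc |s^2 * deriv ρ₀ s * (s^n / r^(n+1)) * Λ s|
            = s^2 * (s^n / r^(n+1)) * (-deriv ρ₀ s) * |Λ s| := by
              rw [abs_mul, abs_mul, abs_mul, abs_of_nonneg (sq_nonneg s),
                abs_of_nonneg (by positivity : (0:ℝ) ≤ s^n / r^(n+1)),
                abs_of_nonpos (hρmono s hs.le)]
              ring
          _ ≤ s^3 / r^2 * (-deriv ρ₀ s) * M := by
              gcongr
          _ = -deriv ρ₀ s * s^3 * (M / r^2) := by ring
      have bound2 : ∀ s ∈ Set.Icc r 3,
          |s^2 * deriv ρ₀ s * (r^n / s^(n+1)) * Λ s| ≤ -deriv ρ₀ s * (r * M) := by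
        rintro s ⟨hrs, hs3⟩
        have hs : 0 < s := lt_of_lt_of_le hr0 hrs
        have hΛs : |Λ s| ≤ M := hle s ⟨hs, hs3⟩
        have hd : 0 ≤ -deriv ρ₀ s := neg_nonneg.2 (hρmono s hs.le)
        have key : s^2 * (r^n / s^(n+1)) ≤ r := by
          rw [mul_div_assoc', div_le_iff₀ (by positivity)]
          have h1 : r^(m+1) ≤ s^(m+1) := pow_le_pow_left₀ hr0.le hrs _
          calc s^2 * r^n = r^(m+1) * (r * s^2) := by rw [hnval]; ring
            _ ≤ s^(m+1) * (r * s^2) := by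
                exact mul_le_mul_of_nonneg_right h1 (by positivity)
            _ = r * s^(n+1) := by rw [hnval]; ring
        calc |s^2 * deriv ρ₀ s * (r^n / s^(n+1)) * Λ s|
            = s^2 * (r^n / s^(n+1)) * (-deriv ρ₀ s) * |Λ s| := by
              rw [abs_mul, abs_mul, abs_mul, abs_of_nonneg (sq_nonneg s),
                abs_of_nonneg (by positivity : (0:ℝ) ≤ r^n / s^(n+1)),
                abs_of_nonpos (hρmono s hs.le)]
              ring
          _ ≤ r * (-deriv ρ₀ s) * M := by gcongr
          _ = -deriv ρ₀ s * (r * M) := by ring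
      -- estimate the two integrals
      have hA : |∫ s in (0:ℝ)..r, s^2 * deriv ρ₀ s * (s^n / r^(n+1)) * Λ s|
          ≤ ∫ s in (0:ℝ)..r, -deriv ρ₀ s * s^3 * (M / r^2) := by
        refine le_trans (intervalIntegral.abs_integral_le_integral_abs hr0.le) ?_
        exact intervalIntegral.integral_mono_on hr0.le hint1.abs hg1int bound1
      have hB : |∫ s in r..(3:ℝ), s^2 * deriv ρ₀ s * (r^n / s^(n+1)) * Λ s|
          ≤ ∫ s in r..(3:ℝ), -deriv ρ₀ s * (r * M) := by
        refine le_trans (intervalIntegral.abs_integral_le_integral_abs hr3) ?_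
        exact intervalIntegral.integral_mono_on hr3 hint2.abs hg2int bound2
      -- compute the dominating integrals
      have hIBP : ∫ s in (0:ℝ)..r, s^3 * deriv ρ₀ s = r^3 * ρ₀ r - 3 * I := by
        have hu : ∀ x ∈ Set.uIcc (0:ℝ) r, HasDerivAt (fun s : ℝ => s^3) (3 * x^2) x := by
          intro x _
          simpa using hasDerivAt_pow 3 x
        have hv : ∀ x ∈ Set.uIcc (0:ℝ) r, HasDerivAt ρ₀ (deriv ρ₀ x) x := fun x _ =>
          (hρC1.differentiable one_ne_zero x).hasDerivAt
        have h := intervalIntegral.integral_deriv_mul_eq_sub hu hv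
          ((continuous_const.mul (continuous_pow 2)).intervalIntegrable _ _)
          (hρ'cont.intervalIntegrable _ _)
        have hadd : (∫ s in (0:ℝ)..r, 3 * s^2 * ρ₀ s + s^3 * deriv ρ₀ s)
            = (∫ s in (0:ℝ)..r, 3 * s^2 * ρ₀ s) + ∫ s in (0:ℝ)..r, s^3 * deriv ρ₀ s :=
          intervalIntegral.integral_add
            (((continuous_const.mul (continuous_pow 2)).mul hρcont).intervalIntegrable _ _)
            (((continuous_pow 3).mul hρ'cont).intervalIntegrable _ _)
        have h3 : (∫ s in (0:ℝ)..r, 3 * s^2 * ρ₀ s) = 3 * I := by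
          rw [hI, ← intervalIntegral.integral_const_mul]
          congr 1; funext s; ring
        rw [hadd, h3] at h
        simp only [ne_eq, OfNat.ofNat_ne_zero, not_false_eq_true, zero_pow, zero_mul,
          sub_zero] at h
        linarith
      have hg1 : (∫ s in (0:ℝ)..r, -deriv ρ₀ s * s^3 * (M / r^2))
          = (3 * I - r^3 * ρ₀ r) * (M / r^2) := by
        rw [intervalIntegral.integral_mul_const]
        congr 1
        have : (∫ s in (0:ℝ)..r, -deriv ρ₀ s * s^3) = -∫ s in (0:ℝ)..r, s^3 * deriv ρ₀ s := by
          rw [← intervalIntegral.integral_neg]; congr 1; funext s; ring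
        rw [this, hIBP]; ring
      have hg2 : (∫ s in r..(3:ℝ), -deriv ρ₀ s * (r * M)) = ρ₀ r * (r * M) := by
        rw [intervalIntegral.integral_mul_const]
        congr 1
        have hftc : (∫ s in r..(3:ℝ), deriv ρ₀ s) = ρ₀ 3 - ρ₀ r :=
          intervalIntegral.integral_deriv_eq_sub
            (fun x _ => hρC1.differentiable one_ne_zero x) (hρ'cont.intervalIntegrable _ _)
        rw [intervalIntegral.integral_neg, hftc, hρsupp 3 (by norm_num)]
        ring
      -- final estimate
      have hcoef : 0 < (2 * (n:ℝ) + 1) * U₀' r := by positivity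
      have := heq r ⟨hr0, hr3⟩
      rw [this, abs_mul, abs_neg, abs_of_nonneg (by positivity : (0:ℝ) ≤ 4 * π / ((2 * (n:ℝ) + 1) * U₀' r))]
      have habs : |(∫ s in (0:ℝ)..r, s^2 * deriv ρ₀ s * (s^n / r^(n+1)) * Λ s) +
          ∫ s in r..(3:ℝ), s^2 * deriv ρ₀ s * (r^n / s^(n+1)) * Λ s| ≤ 3 * I * M / r^2 := by
        refine le_trans (abs_add_le _ _) ?_
        have := add_le_add hA hB
        rw [hg1, hg2] at this
        calc _ ≤ (3 * I - r^3 * ρ₀ r) * (M / r^2) + ρ₀ r * (r * M) := this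
          _ = 3 * I * M / r^2 := by field_simp; ring
      calc 4 * π / ((2 * (n:ℝ) + 1) * U₀' r) * |_| ≤
            4 * π / ((2 * (n:ℝ) + 1) * U₀' r) * (3 * I * M / r^2) := by gcongr
        _ = 3 / (2 * (n:ℝ) + 1) * M := by
            rw [hU]; field_simp
  have h1 : M ≤ 3 / (2 * (n:ℝ) + 1) * M := ciSup_le fun r => main r r.2
  refine ⟨h1, ?_⟩
  have hMz : M = 0 := by
    have hfrac : 3 / (2 * (n:ℝ) + 1) ≤ 3 / 5 := by
      apply div_le_div_of_nonneg_left (by norm_num) (by norm_num)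
      have : (2:ℝ) ≤ (n:ℝ) := by exact_mod_cast (by omega : 2 ≤ n)
      linarith
    have : 3 / (2 * (n:ℝ) + 1) * M ≤ 3 / 5 * M := mul_le_mul_of_nonneg_right hfrac hM0
    nlinarith
  intro r hr
  have := hle r hr
  rw [hMz] at this
  exact abs_eq_zero.mp (le_antisymm this (abs_nonneg _))
end
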